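/- arXiv:2407.19386 — 5 statements merged into one kernel-verified Lean document; each statement's English description precedes it below -/
import Mathlib

section
/- Let 1 < α < 2 and g_k = (-1)^k binom(α,k). Then Σ_{k=0}^∞ g_k = 0 and for every n ≥ 1, the partial sum Σ_{k=0}^n g_k < 0. -/
open Finset

theorem grunwald_coeffs_sum_zero_partial_neg (α : ℝ) (hα : 1 < α ∧ α < 2) (g : ℕ → ℝ)
    (hg : ∀ k : ℕ, g k = (-1 : ℝ) ^ k * ((∏ j ∈ Finset.range k, (α - (j : ℝ))) / (k.factorial : ℝ))) :
    (∑' k : ℕ, g k) = 0 ∧ ∀ n : ℕ, 1 ≤ n → (∑ k ∈ Finset.range (n + 1), g k) < 0 := by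
  obtain ⟨h1, h2⟩ := hα
  have fact_ne : ∀ n : ℕ, (n.factorial : ℝ) ≠ 0 := fun n =>
    Nat.cast_ne_zero.2 n.factorial_ne_zero
  have fact_pos : ∀ n : ℕ, (0:ℝ) < (n.factorial : ℝ) := fun n => by
    exact_mod_cast n.factorial_pos
  -- partial sum formula
  have key : ∀ n : ℕ, ∑ k ∈ Finset.range (n+1), g k
      = (-1:ℝ)^n * (∏ j ∈ Finset.range n, (α - 1 - (j:ℝ))) / n.factorial := by
    intro n
    induction n with
    | zero => simp [hg]
    | succ n ih =>
      rw [Finset.sum_range_succ, ih, hg (n+1)]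
      have hQ : ∏ j ∈ Finset.range (n+1), (α - (j:ℝ))
          = α * ∏ j ∈ Finset.range n, (α - 1 - (j:ℝ)) := by
        rw [Finset.prod_range_succ']
        rw [Nat.cast_zero, sub_zero, mul_comm]
        congr 1
        apply Finset.prod_congr rfl
        intro j _
        push_cast
        ring
      rw [hQ, Finset.prod_range_succ, Nat.factorial_succ]
      push_cast
      field_simp
      ring
  -- negativity of the signed product
  have hneg : ∀ n : ℕ, 1 ≤ n → (-1:ℝ)^n * (∏ j ∈ Finset.range n, (α - 1 - (j:ℝ))) < 0 := by
    intro n hn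
    induction n, hn using Nat.le_induction with
    | base =>
      simp only [Finset.prod_range_one, Nat.cast_zero, sub_zero, pow_one]
      linarith
    | succ n hn ih =>
      have hpos : (0:ℝ) < (n:ℝ) + 1 - α := by
        have : (1:ℝ) ≤ (n:ℝ) := by exact_mod_cast hn
        linarith
      calc (-1:ℝ)^(n+1) * (∏ j ∈ Finset.range (n+1), (α - 1 - (j:ℝ)))
          = ((-1:ℝ)^n * ∏ j ∈ Finset.range n, (α - 1 - (j:ℝ))) * ((n:ℝ) + 1 - α) := by
            rw [Finset.prod_range_succ]; ring
        _ < 0 := mul_neg_of_neg_of_pos ih hpos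
  have hSneg : ∀ n : ℕ, 1 ≤ n → (∑ k ∈ Finset.range (n+1), g k) < 0 := by
    intro n hn
    rw [key n]
    exact div_neg_of_neg_of_pos (hneg n hn) (fact_pos n)
  refine ⟨?_, hSneg⟩
  -- positivity of shifted terms
  have hposQ : ∀ k : ℕ, (0:ℝ) < (-1:ℝ)^k * ∏ j ∈ Finset.range (k+2), (α - (j:ℝ)) := by
    intro k
    induction k with
    | zero =>
      simp only [pow_zero, one_mul]
      rw [Finset.prod_range_succ, Finset.prod_range_one]
      push_cast
      nlinarith
    | succ k ih =>
      have hpos : (0:ℝ) < (k:ℝ) + 2 - α := by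
        have : (0:ℝ) ≤ (k:ℝ) := Nat.cast_nonneg k
        linarith
      calc (0:ℝ) < ((-1:ℝ)^k * ∏ j ∈ Finset.range (k+2), (α - (j:ℝ))) * ((k:ℝ) + 2 - α) :=
            mul_pos ih hpos
        _ = (-1:ℝ)^(k+1) * ∏ j ∈ Finset.range (k+3), (α - (j:ℝ)) := by
            have hps := Finset.prod_range_succ (fun j : ℕ => α - (j:ℝ)) (k+2)
            rw [show k+3 = k+2+1 from rfl, hps]; push_cast; ring
  have hg2pos : ∀ k : ℕ, (0:ℝ) ≤ g (k+2) := by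
    intro k
    rw [hg (k+2)]
    have h := hposQ k
    have hfe : (0:ℝ) < ((k+2).factorial : ℝ) := fact_pos (k+2)
    have : (-1:ℝ)^(k+2) = (-1:ℝ)^k := by ring
    rw [this, ← mul_div_assoc]
    exact le_of_lt (div_pos h hfe)
  have hg0 : g 0 = 1 := by simp [hg]
  have hg1 : g 1 = -α := by
    rw [hg 1]
    simp
  -- sum of shifted terms: relate to partial sums
  have hshift : ∀ n : ℕ, ∑ k ∈ Finset.range n, g (k+2)
      = (∑ k ∈ Finset.range (n+2), g k) - 1 + α := by
    intro n
    have h1' : ∑ k ∈ Finset.range (n+2), g k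
        = (∑ i ∈ Finset.range (n+1), g (i+1)) + g 0 := Finset.sum_range_succ' g (n+1)
    have h2' : ∑ i ∈ Finset.range (n+1), g (i+1)
        = (∑ i ∈ Finset.range n, g (i+2)) + g 1 := Finset.sum_range_succ' (fun i => g (i+1)) n
    rw [h1', h2', hg0, hg1]
    ring
  -- summability
  have hsum2 : Summable (fun k => g (k+2)) := by
    apply summable_of_sum_range_le (c := α) hg2pos
    intro n
    rw [hshift n]
    have := hSneg (n+1) (Nat.le_add_left 1 n)
    linarith
  have hsg : Summable g := (summable_nat_add_iff 2).mp hsum2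
  -- bound on the product
  have hbound : ∀ n : ℕ, |∏ j ∈ Finset.range (n+1), (α - 1 - (j:ℝ))| ≤ (α - 1) * n.factorial := by
    intro n
    induction n with
    | zero =>
      simp only [zero_add, Finset.prod_range_one, Nat.cast_zero, sub_zero, Nat.factorial_zero,
        Nat.cast_one, mul_one]
      exact le_of_eq (abs_of_pos (by linarith))
    | succ n ih =>
      rw [Finset.prod_range_succ, abs_mul]
      have h3 : |α - 1 - ((n:ℝ)+1)| ≤ (n:ℝ) + 1 := by
        rw [abs_sub_comm, abs_of_nonneg (by linarith [Nat.cast_nonneg (α := ℝ) n])]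
        linarith [Nat.cast_nonneg (α := ℝ) n]
      have h4 : |α - 1 - ((n+1:ℕ):ℝ)| ≤ (n:ℝ) + 1 := by push_cast; exact h3
      calc |∏ j ∈ Finset.range (n+1), (α - 1 - (j:ℝ))| * |α - 1 - ((n+1:ℕ):ℝ)|
          ≤ ((α-1) * n.factorial) * ((n:ℝ)+1) :=
            mul_le_mul ih h4 (abs_nonneg _) (mul_nonneg (by linarith) (fact_pos n).le)
        _ = (α - 1) * ((n+1).factorial : ℝ) := by
            rw [Nat.factorial_succ]; push_cast; ring
  -- partial sums tend to 0
  have hT0 : Filter.Tendsto (fun n : ℕ => ∑ k ∈ Finset.range (n+1), g k)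
      Filter.atTop (nhds 0) := by
    apply squeeze_zero_norm' (a := fun n : ℕ => (α - 1) * (1 / (n:ℝ)))
    · rw [Filter.eventually_atTop]
      refine ⟨1, ?_⟩
      rintro (_ | m) hm
      · exact absurd hm (by norm_num)
      rw [key (m+1), Real.norm_eq_abs, abs_div, abs_mul, abs_pow, abs_neg, abs_one, one_pow,
        one_mul, abs_of_pos (fact_pos (m+1))]
      rw [div_le_iff₀ (fact_pos (m+1))]
      have hmf : ((m+1:ℕ):ℝ) ≠ 0 := Nat.cast_ne_zero.mpr (Nat.succ_ne_zero m)
      calc |∏ j ∈ Finset.range (m+1), (α - 1 - (j:ℝ))| ≤ (α-1) * m.factorial := hbound m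
        _ = (α - 1) * (1 / ((m+1:ℕ):ℝ)) * (((m+1:ℕ)).factorial : ℝ) := by
            rw [Nat.factorial_succ]
            push_cast
            field_simp
    · have h6 : Filter.Tendsto (fun n : ℕ => 1 / (n:ℝ)) Filter.atTop (nhds 0) :=
        tendsto_one_div_atTop_nhds_zero_nat
      simpa using h6.const_mul (α - 1)
  have hT : Filter.Tendsto (fun n : ℕ => ∑ k ∈ Finset.range (n+1), g k)
      Filter.atTop (nhds (∑' k, g k)) :=
    hsg.hasSum.tendsto_sum_nat.comp (Filter.tendsto_add_atTop_nat 1)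
  exact tendsto_nhds_unique hT hT0
end

section
/- Let 1 < α < 2 and define w_k^{(α)} by w_0 = α/2, w_k = (α/2) g_k + ((2-α)/2) g_{k-1} for k ≥ 1, where g_k = (-1)^k binom(α,k). Then Σ_{k=0}^∞ w_k = 0 and Σ_{k=0}^n w_k < 0 for all n ≥ 2. -/
open Finset Filter Topology

theorem weighted_grunwald_sum_zero_partial_neg (α : ℝ) (hα : 1 < α ∧ α < 2) (g w : ℕ → ℝ)
    (hg : ∀ k : ℕ, g k = (-1 : ℝ) ^ k * ((∏ j ∈ Finset.range k, (α - (j : ℝ))) / (k.factorial : ℝ)))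
    (hw0 : w 0 = α / 2)
    (hwk : ∀ k : ℕ, 1 ≤ k → w k = (α / 2) * g k + ((2 - α) / 2) * g (k - 1)) :
    (∑' k : ℕ, w k) = 0 ∧ ∀ n : ℕ, 2 ≤ n → (∑ k ∈ Finset.range (n + 1), w k) < 0 := by
  obtain ⟨hα1, hα2⟩ := hα
  have hαpos : (0:ℝ) < α := lt_trans one_pos hα1
  have hg0 : g 0 = 1 := by simp [hg]
  have hg1 : g 1 = -α := by simp [hg]
  -- recurrence for g
  have hgrec : ∀ k : ℕ, g (k+1) = (((k:ℝ) - α)/((k:ℝ)+1)) * g k := by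
    intro k
    have hf : ((k.factorial : ℝ)) ≠ 0 := Nat.cast_ne_zero.mpr k.factorial_ne_zero
    have hk1 : ((k:ℝ)+1) ≠ 0 := by positivity
    rw [hg, hg, Finset.prod_range_succ, Nat.factorial_succ]
    push_cast
    field_simp
    ring
  -- positivity of g from index 2 on
  have hg2 : g 2 = α * (α - 1) / 2 := by
    have h := hgrec 1
    rw [hg1] at h
    rw [show (2:ℕ) = 1 + 1 from rfl, h]; push_cast; ring
  have hgpos : ∀ k : ℕ, 0 < g (k+2) := by
    intro k
    induction k with
    | zero => rw [show (0+2 : ℕ) = 2 from rfl, hg2]; nlinarith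
    | succ n ih =>
        have h := hgrec (n+2)
        rw [show n+1+2 = (n+2)+1 from rfl, h]
        apply mul_pos _ ih
        apply div_pos
        · push_cast; linarith
        · positivity
  -- partial sums of g
  set G : ℕ → ℝ := fun n => ∑ k ∈ Finset.range (n+1), g k with hGdef
  have hGsucc : ∀ n : ℕ, G (n+1) = G n + g (n+1) := by
    intro n; simp [hGdef, Finset.sum_range_succ]
  have hG0 : G 0 = 1 := by simp [hGdef, hg0]
  have hG1 : G 1 = 1 - α := by rw [hGsucc 0, hG0, hg1]; ring
  -- g (n+1) in terms of G n
  have hGg : ∀ n : ℕ, g (n+1) = -(α/((n:ℝ)+1)) * G n := by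
    intro n
    induction n with
    | zero => rw [hg1, hG0]; norm_num
    | succ m ih =>
        have h := hgrec (m+1)
        rw [show m+1+1 = (m+1)+1 from rfl, h, ih, hGsucc m, ih]
        have hm1 : ((m:ℝ)+1) ≠ 0 := by positivity
        have hm2 : ((m:ℝ)+1+1) ≠ 0 := by positivity
        push_cast
        field_simp
        ring
  have hGrec : ∀ n : ℕ, G (n+1) = (((n:ℝ)+1-α)/((n:ℝ)+1)) * G n := by
    intro n
    rw [hGsucc n, hGg n]
    have hm1 : ((n:ℝ)+1) ≠ 0 := by positivity
    field_simp
    ring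
  -- sign and bound for G
  have hGbound : ∀ n : ℕ, 1 ≤ n → 0 < -G n ∧ -G n ≤ (α-1)/(n:ℝ) := by
    intro n hn
    induction n, hn using Nat.le_induction with
    | base =>
        rw [hG1]
        constructor
        · linarith
        · push_cast
          rw [div_one]
          linarith
    | succ m hm ih =>
        obtain ⟨ih1, ih2⟩ := ih
        have hmpos : (0:ℝ) < (m:ℝ) := by exact_mod_cast hm
        have hm1 : (1:ℝ) ≤ (m:ℝ) := by exact_mod_cast hm
        have hfacpos : 0 < ((m:ℝ)+1-α)/((m:ℝ)+1) := by
          apply div_pos _ (by positivity)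
          linarith
        have hrec := hGrec m
        have hkey : ((m:ℝ)+1-α) * (-G m) ≤ α - 1 := by
          have h1 : (m:ℝ) * (-G m) ≤ α - 1 := by
            rw [le_div_iff₀ hmpos] at ih2; linarith
          nlinarith
        constructor
        · rw [hrec]; push_cast; nlinarith
        · rw [hrec]
          push_cast
          have hrw : -(((m:ℝ)+1-α)/((m:ℝ)+1) * G m)
              = (((m:ℝ)+1-α) * (-G m))/((m:ℝ)+1) := by ring
          rw [hrw]
          gcongr
  have hGneg : ∀ n : ℕ, 1 ≤ n → G n < 0 := by
    intro n hn
    have := (hGbound n hn).1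
    linarith
  -- G tends to 0
  have hGlim : Tendsto G atTop (𝓝 0) := by
    have hlow : ∀ᶠ n : ℕ in atTop, -((α-1)/(n:ℝ)) ≤ G n := by
      filter_upwards [eventually_ge_atTop 1] with n hn
      have := (hGbound n hn).2
      linarith
    have hhigh : ∀ᶠ n : ℕ in atTop, G n ≤ 0 := by
      filter_upwards [eventually_ge_atTop 1] with n hn
      exact le_of_lt (hGneg n hn)
    have h1 : Tendsto (fun n : ℕ => -((α-1)/(n:ℝ))) atTop (𝓝 0) := by
      have := (tendsto_const_div_atTop_nhds_zero_nat (α-1)).neg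
      simpa using this
    exact tendsto_of_tendsto_of_tendsto_of_le_of_le' h1 tendsto_const_nhds hlow hhigh
  -- partial sums of w
  have hT : ∀ n : ℕ, ∑ k ∈ Finset.range (n+2), w k = (α/2) * G (n+1) + ((2-α)/2) * G n := by
    intro n
    induction n with
    | zero =>
        rw [Finset.sum_range_succ, Finset.sum_range_one, hw0, hwk 1 le_rfl, hG1, hG0]
        norm_num [hg0, hg1]
        ring
    | succ m ih =>
        rw [show m+1+2 = (m+2)+1 from rfl, Finset.sum_range_succ, ih,
          hwk (m+2) (by omega), show m+2-1 = m+1 from rfl, hGsucc (m+1), hGsucc m]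
        ring
  -- negativity of partial sums
  have hneg : ∀ n : ℕ, 2 ≤ n → (∑ k ∈ Finset.range (n + 1), w k) < 0 := by
    intro n hn
    obtain ⟨m, rfl⟩ : ∃ m, n = m + 2 := ⟨n - 2, by omega⟩
    rw [show m+2+1 = (m+1)+2 from rfl, hT (m+1)]
    have h1 := hGneg (m+2) (by omega)
    have h2 := hGneg (m+1) (by omega)
    have c1 : (0:ℝ) < α/2 := by linarith
    have c2 : (0:ℝ) < (2-α)/2 := by linarith
    nlinarith
  refine ⟨?_, hneg⟩
  -- summability of g
  have hgsum : Summable g := by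
    have hsum2 : Summable (fun k : ℕ => g (k+2)) := by
      apply summable_of_sum_range_le (c := α - 1) (fun k => (hgpos k).le)
      intro n
      have hdecomp : ∑ i ∈ Finset.range (2+n), g i
          = (∑ i ∈ Finset.range 2, g i) + ∑ i ∈ Finset.range n, g (2+i) :=
        Finset.sum_range_add g 2 n
      have hGform : G (n+1) = ∑ i ∈ Finset.range (2+n), g i := by
        have hnn : n+1+1 = 2+n := by omega
        simp only [hGdef, hnn]
      have h2 : ∑ i ∈ Finset.range 2, g i = 1 - α := by
        rw [Finset.sum_range_succ, Finset.sum_range_one, hg0, hg1]; ring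
      have hle : G (n+1) < 0 := hGneg (n+1) (by omega)
      have heq : ∑ i ∈ Finset.range n, g (i+2) = ∑ i ∈ Finset.range n, g (2+i) := by
        apply Finset.sum_congr rfl; intro i _; congr 1; omega
      rw [heq]
      have := hdecomp
      rw [h2] at this
      rw [← hGform] at this
      linarith
    exact (summable_nat_add_iff 2).mp hsum2
  -- summability of w
  have hwsum : Summable w := by
    have hshift : Summable (fun n : ℕ => w (n+1)) := by
      have h1 : Summable (fun n : ℕ => (α/2) * g (n+1)) :=
        (((summable_nat_add_iff 1).mpr hgsum)).mul_left _
      have h2 : Summable (fun n : ℕ => ((2-α)/2) * g n) := hgsum.mul_left _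
      apply (h1.add h2).congr
      intro n
      rw [hwk (n+1) (by omega), show n+1-1 = n from rfl]
    exact (summable_nat_add_iff 1).mp hshift
  -- the sum is 0
  have hlim2 : Tendsto (fun n : ℕ => ∑ k ∈ Finset.range (n+2), w k) atTop (𝓝 0) := by
    have h1 : Tendsto (fun n : ℕ => G (n+1)) atTop (𝓝 0) :=
      hGlim.comp (tendsto_add_atTop_nat 1)
    have h2 : Tendsto (fun n : ℕ => (α/2) * G (n+1) + ((2-α)/2) * G n) atTop
        (𝓝 ((α/2) * 0 + ((2-α)/2) * 0)) :=
      ((h1.const_mul _).add (hGlim.const_mul _))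
    simp only [mul_zero, add_zero] at h2
    exact h2.congr (fun n => (hT n).symm)
  have hlim : Tendsto (fun n : ℕ => ∑ k ∈ Finset.range n, w k) atTop (𝓝 0) := by
    rw [← tendsto_add_atTop_iff_nat 2]
    exact hlim2
  exact tendsto_nhds_unique hwsum.hasSum.tendsto_sum_nat hlim
end

section
/- Let A be an n×n Hermitian matrix and W an n×n nonsingular matrix. For each k = 1,...,n (with eigenvalues of A and of W W* arranged in increasing order), there exists θ_k with λ_min(W W*) ≤ θ_k ≤ λ_max(W W*) such that λ_k(W A W*) = θ_k · λ_k(A). -/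
/-!
Since `⟪x, W A Wᴴ x⟫ = ⟪Wᴴ x, A (Wᴴ x)⟫` and `m ‖x‖² ≤ ‖Wᴴ x‖² = ⟪x, W Wᴴ x⟫ ≤ M ‖x‖²` with
`m`, `M` the extreme eigenvalues of `W Wᴴ`, pulling back along `Wᴴ` the span of the eigenvectors of
`A` for `λ₁(A), …, λₖ(A)` gives a `k`-dimensional subspace on which the Rayleigh quotient of
`W A Wᴴ` is at most `max (m λₖ(A)) (M λₖ(A))`; symmetrically, the eigenvectors for
`λₖ(A), …, λₙ(A)` give an `(n - k + 1)`-dimensional one on which it is at least the minimum.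
By Courant–Fischer, in the form "such a subspace meets the span of the complementary eigenvectors",
`λₖ(W A Wᴴ)` lies between `m λₖ(A)` and `M λₖ(A)`, hence equals `θ λₖ(A)` with `θ ∈ [m, M]`.
-/

open Matrix Module Submodule Set
open scoped InnerProductSpace

theorem Submodule.exists_mem_inf_ne_zero_of_finrank_lt {K V : Type*} [DivisionRing K]
    [AddCommGroup V] [Module K V] [FiniteDimensional K V] {S T : Submodule K V}
    (h : finrank K V < finrank K S + finrank K T) : ∃ x ∈ S ⊓ T, x ≠ 0 := by
  refine exists_mem_ne_zero_of_ne_bot fun hST => h.not_ge ?_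
  rw [← finrank_sup_add_finrank_inf_eq, hST, finrank_bot, add_zero]
  exact finrank_le _

theorem LinearIndependent.finrank_span_image_finset {K V ι : Type*} [DivisionRing K]
    [AddCommGroup V] [Module K V] {v : ι → V} (hv : LinearIndependent K v) (s : Finset ι) :
    finrank K (span K (v '' s)) = s.card := by
  have hrange : Set.range (v ∘ ((↑) : s → ι)) = v '' s := by
    rw [Set.range_comp, Subtype.range_coe]
  rw [← hrange, finrank_span_eq_card (hv.comp _ Subtype.val_injective), Fintype.card_coe]

theorem mul_le_sup_mul_of_le_of_le {a q m M r : ℝ} (hr : 0 ≤ r) (hm : m * r ≤ q)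
    (hM : q ≤ M * r) :
    a * q ≤ (m * a ⊔ M * a) * r := by
  rcases le_total 0 a with ha | ha
  · nlinarith [le_sup_right (a := m * a) (b := M * a)]
  · nlinarith [le_sup_left (a := m * a) (b := M * a)]

theorem inf_mul_le_mul_of_le_of_le {a q m M r : ℝ} (hr : 0 ≤ r) (hm : m * r ≤ q)
    (hM : q ≤ M * r) :
    (m * a ⊓ M * a) * r ≤ a * q := by
  rcases le_total 0 a with ha | ha
  · nlinarith [inf_le_left (a := m * a) (b := M * a)]
  · nlinarith [inf_le_right (a := m * a) (b := M * a)]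

variable {𝕜 E : Type*} [RCLike 𝕜] [NormedAddCommGroup E] [InnerProductSpace 𝕜 E]

theorem Orthonormal.inner_eq_zero_of_mem_span {ι : Type*} {v : ι → E} (hv : Orthonormal 𝕜 v)
    {s : Set ι} {i : ι} (hi : i ∉ s) {x : E} (hx : x ∈ span 𝕜 (v '' s)) : ⟪v i, x⟫_𝕜 = 0 := by
  obtain ⟨l, hl, rfl⟩ := (Finsupp.mem_span_image_iff_linearCombination 𝕜).1 hx
  exact inner_eq_zero_symm.1 (hv.inner_finsupp_eq_zero hi hl)

theorem OrthonormalBasis.span_image_univ {ι : Type*} [Fintype ι] (b : OrthonormalBasis ι 𝕜 E) :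
    span 𝕜 (b '' univ) = ⊤ := by
  rw [image_univ, ← OrthonormalBasis.coe_toBasis, Basis.span_eq]

section Eigenbasis

variable {ι : Type*} [Fintype ι] {T : E →ₗ[𝕜] E} {b : OrthonormalBasis ι 𝕜 E} {μ : ι → ℝ}

theorem re_inner_map_self_eq_sum (hT : T.IsSymmetric) (hb : ∀ i, T (b i) = (μ i : 𝕜) • b i)
    (x : E) : RCLike.re ⟪x, T x⟫_𝕜 = ∑ i, μ i * ‖⟪b i, x⟫_𝕜‖ ^ 2 := by
  rw [← b.sum_inner_mul_inner, map_sum]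
  refine Finset.sum_congr rfl fun i _ => ?_
  rw [← hT, hb, inner_smul_left, RCLike.conj_ofReal, ← inner_conj_symm x, mul_left_comm,
    RCLike.conj_mul, ← RCLike.ofReal_pow, ← RCLike.ofReal_mul, RCLike.ofReal_re]

theorem re_inner_map_self_le_of_mem_span (hT : T.IsSymmetric)
    (hb : ∀ i, T (b i) = (μ i : 𝕜) • b i) {s : Set ι} {t : ℝ} (hs : ∀ i ∈ s, μ i ≤ t) {x : E}
    (hx : x ∈ span 𝕜 (b '' s)) : RCLike.re ⟪x, T x⟫_𝕜 ≤ t * ‖x‖ ^ 2 := by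
  rw [re_inner_map_self_eq_sum hT hb, ← b.sum_sq_norm_inner_right, Finset.mul_sum]
  refine Finset.sum_le_sum fun i _ => ?_
  by_cases hi : i ∈ s
  · exact mul_le_mul_of_nonneg_right (hs i hi) (sq_nonneg _)
  · simp [b.orthonormal.inner_eq_zero_of_mem_span hi hx]

theorem le_re_inner_map_self_of_mem_span (hT : T.IsSymmetric)
    (hb : ∀ i, T (b i) = (μ i : 𝕜) • b i) {s : Set ι} {t : ℝ} (hs : ∀ i ∈ s, t ≤ μ i) {x : E}
    (hx : x ∈ span 𝕜 (b '' s)) : t * ‖x‖ ^ 2 ≤ RCLike.re ⟪x, T x⟫_𝕜 := by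
  rw [re_inner_map_self_eq_sum hT hb, ← b.sum_sq_norm_inner_right, Finset.mul_sum]
  refine Finset.sum_le_sum fun i _ => ?_
  by_cases hi : i ∈ s
  · exact mul_le_mul_of_nonneg_right (hs i hi) (sq_nonneg _)
  · simp [b.orthonormal.inner_eq_zero_of_mem_span hi hx]

end Eigenbasis

section CourantFischer

variable [FiniteDimensional 𝕜 E] {n : ℕ} {T : E →ₗ[𝕜] E} {b : OrthonormalBasis (Fin n) 𝕜 E}
  {μ : Fin n → ℝ}

theorem eigenvalue_le_of_re_inner_map_self_le_on (hT : T.IsSymmetric)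
    (hb : ∀ i, T (b i) = (μ i : 𝕜) • b i) (hμ : Monotone μ) {k : Fin n} {S : Submodule 𝕜 E}
    (hS : (k : ℕ) + 1 ≤ finrank 𝕜 S) {t : ℝ} (ht : ∀ x ∈ S, RCLike.re ⟪x, T x⟫_𝕜 ≤ t * ‖x‖ ^ 2) :
    μ k ≤ t := by
  have hdim : finrank 𝕜 E < finrank 𝕜 S + finrank 𝕜 (span 𝕜 (b '' (Finset.Ici k : Finset _))) := by
    rw [b.orthonormal.linearIndependent.finrank_span_image_finset, Fin.card_Ici,
      finrank_eq_card_basis b.toBasis, Fintype.card_fin]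
    omega
  obtain ⟨x, ⟨hxS, hxk⟩, hx0⟩ := exists_mem_inf_ne_zero_of_finrank_lt hdim
  have hlow : μ k * ‖x‖ ^ 2 ≤ RCLike.re ⟪x, T x⟫_𝕜 :=
    le_re_inner_map_self_of_mem_span hT hb (fun i hi => hμ (Finset.mem_Ici.1 hi)) hxk
  exact le_of_mul_le_mul_right (hlow.trans (ht x hxS)) (by positivity)

theorem le_eigenvalue_of_le_re_inner_map_self_on (hT : T.IsSymmetric)
    (hb : ∀ i, T (b i) = (μ i : 𝕜) • b i) (hμ : Monotone μ) {k : Fin n} {S : Submodule 𝕜 E}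
    (hS : n - k ≤ finrank 𝕜 S) {t : ℝ} (ht : ∀ x ∈ S, t * ‖x‖ ^ 2 ≤ RCLike.re ⟪x, T x⟫_𝕜) :
    t ≤ μ k := by
  have hdim : finrank 𝕜 E < finrank 𝕜 S + finrank 𝕜 (span 𝕜 (b '' (Finset.Iic k : Finset _))) := by
    rw [b.orthonormal.linearIndependent.finrank_span_image_finset, Fin.card_Iic,
      finrank_eq_card_basis b.toBasis, Fintype.card_fin]
    omega
  obtain ⟨x, ⟨hxS, hxk⟩, hx0⟩ := exists_mem_inf_ne_zero_of_finrank_lt hdim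
  have hup : RCLike.re ⟪x, T x⟫_𝕜 ≤ μ k * ‖x‖ ^ 2 :=
    re_inner_map_self_le_of_mem_span hT hb (fun i hi => hμ (Finset.mem_Iic.1 hi)) hxk
  exact le_of_mul_le_mul_right ((ht x hxS).trans hup) (by positivity)

end CourantFischer

section Congruence

variable [FiniteDimensional 𝕜 E] {n : ℕ} {A B : E →ₗ[𝕜] E} {bA bB : OrthonormalBasis (Fin n) 𝕜 E}
  {μ ν : Fin n → ℝ}

theorem eigenvalue_mem_uIcc_of_congruence (hA : A.IsSymmetric)
    (hbA : ∀ i, A (bA i) = (μ i : 𝕜) • bA i) (hμ : Monotone μ) (hB : B.IsSymmetric)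
    (hbB : ∀ i, B (bB i) = (ν i : 𝕜) • bB i) (hν : Monotone ν) (L : E ≃ₗ[𝕜] E)
    (hBA : ∀ x, RCLike.re ⟪x, B x⟫_𝕜 = RCLike.re ⟪L x, A (L x)⟫_𝕜) {m M : ℝ}
    (hm : ∀ x, m * ‖x‖ ^ 2 ≤ ‖L x‖ ^ 2) (hM : ∀ x, ‖L x‖ ^ 2 ≤ M * ‖x‖ ^ 2) (k : Fin n) :
    ν k ∈ uIcc (m * μ k) (M * μ k) := by
  refine ⟨?_, ?_⟩
  · set SA := span 𝕜 (bA '' (Finset.Ici k : Finset _))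
    refine le_eigenvalue_of_le_re_inner_map_self_on hB hbB hν (S := SA.map L.symm.toLinearMap) ?_
      fun x hx => ?_
    · rw [LinearEquiv.finrank_map_eq, bA.orthonormal.linearIndependent.finrank_span_image_finset,
        Fin.card_Ici]
    · have hLx : L x ∈ SA := by simpa using (mem_map_equiv (e := L.symm) _).1 hx
      calc (m * μ k ⊓ M * μ k) * ‖x‖ ^ 2 ≤ μ k * ‖L x‖ ^ 2 :=
            inf_mul_le_mul_of_le_of_le (by positivity) (hm x) (hM x)
        _ ≤ RCLike.re ⟪L x, A (L x)⟫_𝕜 :=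
            le_re_inner_map_self_of_mem_span hA hbA (fun i hi => hμ (Finset.mem_Ici.1 hi)) hLx
        _ = RCLike.re ⟪x, B x⟫_𝕜 := (hBA x).symm
  · set SA := span 𝕜 (bA '' (Finset.Iic k : Finset _))
    refine eigenvalue_le_of_re_inner_map_self_le_on hB hbB hν (S := SA.map L.symm.toLinearMap) ?_
      fun x hx => ?_
    · rw [LinearEquiv.finrank_map_eq, bA.orthonormal.linearIndependent.finrank_span_image_finset,
        Fin.card_Iic]
    · have hLx : L x ∈ SA := by simpa using (mem_map_equiv (e := L.symm) _).1 hx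
      calc RCLike.re ⟪x, B x⟫_𝕜 = RCLike.re ⟪L x, A (L x)⟫_𝕜 := hBA x
        _ ≤ μ k * ‖L x‖ ^ 2 :=
            re_inner_map_self_le_of_mem_span hA hbA (fun i hi => hμ (Finset.mem_Iic.1 hi)) hLx
        _ ≤ (m * μ k ⊔ M * μ k) * ‖x‖ ^ 2 :=
            mul_le_sup_mul_of_le_of_le (by positivity) (hm x) (hM x)

end Congruence

namespace Matrix

variable {ι κ : Type*} [Fintype ι] [DecidableEq ι] [Fintype κ] [DecidableEq κ]

theorem inner_toEuclideanLin_right (W : Matrix ι κ 𝕜) (x : EuclideanSpace 𝕜 ι)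
    (y : EuclideanSpace 𝕜 κ) :
    ⟪x, toEuclideanLin W y⟫_𝕜 = ⟪toEuclideanLin Wᴴ x, y⟫_𝕜 := by
  rw [toEuclideanLin_conjTranspose_eq_adjoint, LinearMap.adjoint_inner_left]

theorem inner_toEuclideanLin_mul_mul_conjTranspose (A : Matrix κ κ 𝕜) (W : Matrix ι κ 𝕜)
    (x : EuclideanSpace 𝕜 ι) :
    ⟪x, toEuclideanLin (W * A * Wᴴ) x⟫_𝕜 =
      ⟪toEuclideanLin Wᴴ x, toEuclideanLin A (toEuclideanLin Wᴴ x)⟫_𝕜 := by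
  simp only [toLpLin_mul_same, LinearMap.comp_apply, inner_toEuclideanLin_right]

theorem norm_toEuclideanLin_conjTranspose_sq (W : Matrix ι κ 𝕜) (x : EuclideanSpace 𝕜 ι) :
    ‖toEuclideanLin Wᴴ x‖ ^ 2 = RCLike.re ⟪x, toEuclideanLin (W * Wᴴ) x⟫_𝕜 := by
  rw [toLpLin_mul_same, LinearMap.comp_apply, inner_toEuclideanLin_right,
    inner_self_eq_norm_sq]

namespace IsHermitian

variable {H : Matrix ι ι 𝕜} (hH : H.IsHermitian)
include hH

theorem toEuclideanLin_eigenvectorBasis (i : ι) :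
    toEuclideanLin H (hH.eigenvectorBasis i) = (hH.eigenvalues i : 𝕜) • hH.eigenvectorBasis i := by
  rw [toLpLin_apply, hH.mulVec_eigenvectorBasis, ← RCLike.real_smul_eq_coe_smul (K := 𝕜)]
  rfl

theorem iInf_eigenvalues_mul_norm_sq_le (x : EuclideanSpace 𝕜 ι) :
    (⨅ i, hH.eigenvalues i) * ‖x‖ ^ 2 ≤ RCLike.re ⟪x, toEuclideanLin H x⟫_𝕜 :=
  le_re_inner_map_self_of_mem_span (isSymmetric_toEuclideanLin_iff.2 hH)
    hH.toEuclideanLin_eigenvectorBasis (fun i _ => ciInf_le (finite_range _).bddBelow i)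
    (hH.eigenvectorBasis.span_image_univ ▸ mem_top)

theorem re_inner_le_iSup_eigenvalues_mul_norm_sq (x : EuclideanSpace 𝕜 ι) :
    RCLike.re ⟪x, toEuclideanLin H x⟫_𝕜 ≤ (⨆ i, hH.eigenvalues i) * ‖x‖ ^ 2 :=
  re_inner_map_self_le_of_mem_span (isSymmetric_toEuclideanLin_iff.2 hH)
    hH.toEuclideanLin_eigenvectorBasis (fun i _ => le_ciSup (finite_range _).bddAbove i)
    (hH.eigenvectorBasis.span_image_univ ▸ mem_top)

theorem toEuclideanLin_eigenvectorBasis_reindex {ι' : Type*} [Fintype ι'] (σ : ι' ≃ ι) (j : ι') :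
    toEuclideanLin H (hH.eigenvectorBasis.reindex σ.symm j) =
      (hH.eigenvalues (σ j) : 𝕜) • hH.eigenvectorBasis.reindex σ.symm j := by
  simpa using hH.toEuclideanLin_eigenvectorBasis (σ j)

end IsHermitian

end Matrix

theorem ostrowski_general (n : ℕ) (A W : Matrix (Fin n) (Fin n) ℂ)
    (hA : A.IsHermitian) (hW : IsUnit W)
    (hWAW : (W * A * Wᴴ).IsHermitian) (hWW : (W * Wᴴ).IsHermitian)
    (μA μWAW : Fin n → ℝ) (hμA_mono : Monotone μA) (hμWAW_mono : Monotone μWAW)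
    (hμA : ∃ σ : Equiv.Perm (Fin n), μA = hA.eigenvalues ∘ σ)
    (hμWAW : ∃ σ : Equiv.Perm (Fin n), μWAW = hWAW.eigenvalues ∘ σ) :
    ∀ k : Fin n, ∃ θ : ℝ,
      (⨅ i, hWW.eigenvalues i) ≤ θ ∧ θ ≤ (⨆ i, hWW.eigenvalues i) ∧
      μWAW k = θ * μA k := by
  intro k
  obtain ⟨σA, rfl⟩ := hμA
  obtain ⟨σB, rfl⟩ := hμWAW
  -- `L` is `toEuclideanLin Wᴴ`, bundled as a linear equivalence.
  let L := LinearMap.GeneralLinearGroup.toLinearEquiv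
    (((isUnit_conjTranspose W).2 hW).map
      (toLpLinAlgEquiv 2 : Matrix (Fin n) (Fin n) ℂ ≃ₐ[ℂ] _)).unit
  have hmem := eigenvalue_mem_uIcc_of_congruence (isSymmetric_toEuclideanLin_iff.2 hA)
    (hA.toEuclideanLin_eigenvectorBasis_reindex σA) hμA_mono
    (isSymmetric_toEuclideanLin_iff.2 hWAW) (hWAW.toEuclideanLin_eigenvectorBasis_reindex σB)
    hμWAW_mono L (fun x => congrArg RCLike.re (inner_toEuclideanLin_mul_mul_conjTranspose A W x))
    (fun x => (hWW.iInf_eigenvalues_mul_norm_sq_le x).trans_eq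
      (norm_toEuclideanLin_conjTranspose_sq W x).symm)
    (fun x => (norm_toEuclideanLin_conjTranspose_sq W x).trans_le
      (hWW.re_inner_le_iSup_eigenvalues_mul_norm_sq x)) k
  have hle : (⨅ i, hWW.eigenvalues i) ≤ ⨆ i, hWW.eigenvalues i :=
    (ciInf_le (finite_range _).bddBelow k).trans (le_ciSup (finite_range _).bddAbove k)
  rw [← image_mul_const_uIcc, uIcc_of_le hle] at hmem
  obtain ⟨θ, ⟨hθ_ge, hθ_le⟩, hθ⟩ := hmem
  exact ⟨θ, hθ_ge, hθ_le, hθ.symm⟩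

theorem ostrowski (n : ℕ) (hn : 0 < n) (A W : Matrix (Fin n) (Fin n) ℂ)
    (hA : A.IsHermitian) (hW : IsUnit W)
    (hWAW : (W * A * Wᴴ).IsHermitian) (hWW : (W * Wᴴ).IsHermitian)
    (μA μWAW : Fin n → ℝ) (hμA_mono : Monotone μA) (hμWAW_mono : Monotone μWAW)
    (hμA : ∃ σ : Equiv.Perm (Fin n), μA = hA.eigenvalues ∘ σ)
    (hμWAW : ∃ σ : Equiv.Perm (Fin n), μWAW = hWAW.eigenvalues ∘ σ) :
    ∀ k : Fin n, ∃ θ : ℝ,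
      (⨅ i, hWW.eigenvalues i) ≤ θ ∧ θ ≤ (⨆ i, hWW.eigenvalues i) ∧
      μWAW k = θ * μA k :=
  ostrowski_general n A W hA hW hWAW hWW μA μWAW hμA_mono hμWAW_mono hμA hμWAW
end

section
/- For 1 < α < 2 and θ ∈ (0,π), the real part of g_α(θ) = -e^{-iθ}(1-e^{iθ})^α satisfies Re(g_α(θ)) = -(2 sin(θ/2))^α cos((α/2)(π-θ)+θ), and there holds |Im(g_α(θ))/Re(g_α(θ))| ≤ |tan(απ/2)|, with the supremum over θ ∈ (0,π) equal to |tan(απ/2)|. -/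
/-!
For `θ ∈ (0, 2π)` we have `1 - e^{iθ} = 2 sin(θ/2) e^{i(θ-π)/2}` with the argument `(θ-π)/2` in
`(-π, π]`, so the principal power gives `g_α(θ) = -(2 sin(θ/2))^α e^{-iψ}` with
`ψ = (α/2)(π-θ) + θ`, and `Im g_α / Re g_α = -tan ψ`. For `θ ∈ [0, π]` the phase `ψ` runs affinely
from `απ/2` up to `π`, where `|tan|` decreases, so `|tan ψ| ≤ |tan(απ/2)|`, with equality
approached as `θ → 0⁺` by continuity.
-/

open Real Complex

namespace Complex

theorem one_sub_exp_ofReal_mul_I (θ : ℝ) :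
    1 - exp (θ * I) = (2 * Real.sin (θ / 2) : ℝ) * exp (((θ - π) / 2 : ℝ) * I) := by
  have hw : exp (θ * I) = exp (θ / 2 * I) ^ 2 := by rw [← exp_nat_mul]; push_cast; ring_nf
  have hw' : exp ((θ - π) / 2 * I) = -I * exp (θ / 2 * I) := by
    rw [show (θ - π) / 2 * I = θ / 2 * I + -(π / 2 * I) by ring, exp_add, exp_neg,
      exp_pi_div_two_mul_I, inv_I]
    ring
  have hinv : exp (-(θ / 2 * I)) = (exp (θ / 2 * I))⁻¹ := exp_neg _
  have hne : exp (θ / 2 * I) ≠ 0 := exp_ne_zero _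
  push_cast
  rw [hw, hw', Complex.sin, show -((θ : ℂ) / 2) * I = -(θ / 2 * I) by ring, hinv]
  field_simp
  ring_nf
  rw [I_sq]
  ring

theorem ofReal_mul_exp_mul_I_cpow {r φ : ℝ} (hr : 0 < r) (hφ₁ : -π < φ) (hφ₂ : φ ≤ π) (s : ℂ) :
    (r * exp (φ * I)) ^ s = (r : ℂ) ^ s * exp (φ * s * I) := by
  have hr' : (r : ℂ) ≠ 0 := ofReal_ne_zero.2 hr.ne'
  rw [cpow_def_of_ne_zero (mul_ne_zero hr' (exp_ne_zero _)), cpow_def_of_ne_zero hr',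
    log_ofReal_mul hr (exp_ne_zero _), log_exp (by simpa using hφ₁) (by simpa using hφ₂),
    ofReal_log hr.le, ← exp_add]
  ring_nf

end Complex

theorem Real.abs_tan_le_abs_tan_of_pi_div_two_lt_of_le {a x : ℝ} (ha : π / 2 < a) (hax : a ≤ x)
    (hx : x ≤ π) : |tan x| ≤ |tan a| := by
  rw [← tan_sub_pi x, ← tan_sub_pi a]
  have hx0 : tan (x - π) ≤ 0 :=
    tan_nonpos_of_nonpos_of_neg_pi_div_two_le (by linarith) (by linarith)
  have hmono : tan (a - π) ≤ tan (x - π) :=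
    strictMonoOn_tan.monotoneOn ⟨by linarith, by linarith [pi_pos]⟩
      ⟨by linarith, by linarith [pi_pos]⟩ (by linarith)
  rw [abs_of_nonpos hx0, abs_of_nonpos (hmono.trans hx0)]
  linarith

theorem csSup_image_eq_of_continuousWithinAt {X : Type*} [TopologicalSpace X] {f : X → ℝ}
    {s : Set X} {x : X} (hx : x ∈ closure s) (hf : ContinuousWithinAt f s x)
    (hle : ∀ y ∈ s, f y ≤ f x) : sSup (f '' s) = f x :=
  (isLUB_of_mem_closure (Set.forall_mem_image.2 hle) (hf.mem_closure_image hx)).csSup_eq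
    (closure_nonempty_iff.1 ⟨_, hf.mem_closure_image hx⟩)

noncomputable def gAlpha (α θ : ℝ) : ℂ :=
  -(Complex.exp (-(θ : ℂ) * Complex.I)) * (1 - Complex.exp ((θ : ℂ) * Complex.I)) ^ (α : ℂ)

theorem gAlpha_eq {α θ : ℝ} (hθ : θ ∈ Set.Ioo 0 (2 * π)) :
    gAlpha α θ = -((2 * Real.sin (θ / 2)) ^ α : ℝ) * exp ((-((α / 2) * (π - θ) + θ) : ℝ) * I) := by
  obtain ⟨h0, h2π⟩ := hθ
  have hsin : 0 < Real.sin (θ / 2) := Real.sin_pos_of_pos_of_lt_pi (by linarith) (by linarith)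
  rw [gAlpha, one_sub_exp_ofReal_mul_I,
    ofReal_mul_exp_mul_I_cpow (by positivity) (by linarith) (by linarith),
    ← ofReal_cpow (by positivity), mul_left_comm, neg_mul, ← Complex.exp_add]
  push_cast
  ring_nf

theorem gAlpha_re_im {α θ : ℝ} (hθ : θ ∈ Set.Ioo 0 (2 * π)) :
    (gAlpha α θ).re = -(2 * Real.sin (θ / 2)) ^ α * Real.cos ((α / 2) * (π - θ) + θ) ∧
      (gAlpha α θ).im = (2 * Real.sin (θ / 2)) ^ α * Real.sin ((α / 2) * (π - θ) + θ) := by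
  rw [gAlpha_eq hθ, ← ofReal_neg]
  simp only [re_ofReal_mul, im_ofReal_mul, exp_ofReal_mul_I_re, exp_ofReal_mul_I_im,
    Real.cos_neg, Real.sin_neg, neg_mul_neg, and_self]

theorem abs_im_div_re_gAlpha {α θ : ℝ} (hθ : θ ∈ Set.Ioo 0 (2 * π)) :
    |(gAlpha α θ).im / (gAlpha α θ).re| = |Real.tan ((α / 2) * (π - θ) + θ)| := by
  have hr : (2 * Real.sin (θ / 2)) ^ α ≠ 0 :=
    (rpow_pos_of_pos (mul_pos two_pos
      (Real.sin_pos_of_pos_of_lt_pi (by linarith [hθ.1]) (by linarith [hθ.2]))) α).ne'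
  rw [(gAlpha_re_im hθ).1, (gAlpha_re_im hθ).2, neg_mul, div_neg, mul_div_mul_left _ _ hr,
    abs_neg, Real.tan_eq_sin_div_cos]

theorem im_re_ratio_bound (α : ℝ) (hα : 1 < α ∧ α < 2)
    (g : ℝ → ℂ)
    (hg : ∀ θ : ℝ, g θ =
      -(Complex.exp (-(θ : ℂ) * Complex.I)) * (1 - Complex.exp ((θ : ℂ) * Complex.I)) ^ (α : ℂ)) :
    (∀ θ ∈ Set.Ioo (0 : ℝ) π,
        (g θ).re = -(2 * Real.sin (θ / 2)) ^ α * Real.cos ((α / 2) * (π - θ) + θ) ∧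
        |(g θ).im / (g θ).re| ≤ |Real.tan (α * π / 2)|) ∧
      sSup ((fun θ => |(g θ).im / (g θ).re|) '' Set.Ioo (0 : ℝ) π) = |Real.tan (α * π / 2)| := by
  obtain rfl : g = gAlpha α := funext hg
  obtain ⟨hα₁, hα₂⟩ := hα
  have hpi := pi_pos
  have hsub : Set.Ioo 0 π ⊆ Set.Ioo 0 (2 * π) := Set.Ioo_subset_Ioo_right (by linarith)
  set f : ℝ → ℝ := fun θ => |Real.tan ((α / 2) * (π - θ) + θ)|
  have hf0 : f 0 = |Real.tan (α * π / 2)| := by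
    simp only [f, sub_zero, add_zero, div_mul_eq_mul_div]
  have hbound : ∀ θ ∈ Set.Icc 0 π, f θ ≤ f 0 := fun θ hθ => by
    rw [hf0]
    exact abs_tan_le_abs_tan_of_pi_div_two_lt_of_le (by nlinarith) (by nlinarith [hθ.1])
      (by nlinarith [hθ.2])
  have hratio : Set.EqOn (fun θ => |(gAlpha α θ).im / (gAlpha α θ).re|) f (Set.Ioo 0 π) :=
    fun θ hθ => abs_im_div_re_gAlpha (hsub hθ)
  refine ⟨fun θ hθ => ⟨(gAlpha_re_im (hsub hθ)).1, ?_⟩, ?_⟩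
  · exact ((hratio hθ).trans_le (hbound θ (Set.Ioo_subset_Icc_self hθ))).trans_eq hf0
  have hcont : ContinuousAt f 0 := by
    refine continuous_abs.continuousAt.comp (Real.continuousAt_tan.2 ?_ |>.comp (by fun_prop))
    have hψ₀ : π / 2 < α / 2 * (π - 0) + 0 := by nlinarith
    exact (Real.cos_neg_of_pi_div_two_lt_of_lt hψ₀ (by nlinarith)).ne
  rw [Set.image_congr hratio, ← hf0]
  exact csSup_image_eq_of_continuousWithinAt (by simp [closure_Ioo hpi.ne, hpi.le])
    hcont.continuousWithinAt fun θ hθ => hbound θ (Set.Ioo_subset_Icc_self hθ)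
end

section
/- Let A and P be real symmetric n×n matrices written as A = ν I + Σ_{i=1}^d c_i (I ⊗ H_i ⊗ I) and P = ν I + Σ_{i=1}^d c_i (I ⊗ τ_i ⊗ I) (Kronecker products with identity factors of matching sizes), where ν ≥ 0, c_i > 0, and each H_i, τ_i is symmetric positive definite with all eigenvalues of τ_i^{-1} H_i in (1/2, 3/2). Then every eigenvalue of P^{-1} A lies in (1/2, 3/2). -/
/-!
Conjugating by `τᵢ^{1/2}` turns the spectral hypothesis on `τᵢ⁻¹ Hᵢ` into one on the Hermitian
matrix `τᵢ^{-1/2} Hᵢ τᵢ^{-1/2}`, so `Hᵢ - τᵢ/2` and `3τᵢ/2 - Hᵢ` are positive definite. Tensoring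
with identities, reindexing and summing with weights `cᵢ > 0` preserves this, and the `ν I` terms
only add positive semidefinite multiples of `I`: hence `A - P/2` and `3P/2 - A` are positive
definite. If `μ ≤ 1/2`, then `A - μP = (A - P/2) + (1/2 - μ)P` is positive definite, hence
invertible, and so is `P⁻¹A - μ = P⁻¹(A - μP)`; symmetrically for `μ ≥ 3/2`.
-/

open Matrix Kronecker
open scoped MatrixOrder ComplexOrder

namespace Matrix

section Spectrum

variable {m : Type*} [Fintype m] [DecidableEq m]

theorem IsHermitian.posDef_sub_smul_one {N : Matrix m m ℝ} (hN : N.IsHermitian) {a : ℝ}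
    (h : ∀ μ ∈ spectrum ℝ N, a < μ) : (N - a • 1).PosDef := by
  have hsa : IsSelfAdjoint (N - algebraMap ℝ _ a) :=
    IsSelfAdjoint.sub hN (.algebraMap _ (.all a))
  rw [← isStrictlyPositive_iff_posDef, ← Algebra.algebraMap_eq_smul_one,
    StarOrderedRing.isStrictlyPositive_iff_spectrum_pos (R := ℝ) _ hsa,
    ← spectrum.sub_singleton_eq]
  rintro _ ⟨μ, hμ, a, rfl, rfl⟩
  exact sub_pos.mpr (h μ hμ)

theorem posDef_sub_smul_of_lt_spectrum_inv_mul {H T : Matrix m m ℝ} (hH : H.IsHermitian)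
    (hT : T.PosDef) {a : ℝ} (h : ∀ μ ∈ spectrum ℝ (T⁻¹ * H), a < μ) : (H - a • T).PosDef := by
  set S := CFC.sqrt T
  have hS : IsStrictlyPositive S := hT.isStrictlyPositive.sqrt
  have hST : S * S = T := CFC.sqrt_mul_sqrt_self T hT.posSemidef.nonneg
  have hSdet : IsUnit S.det := (isUnit_iff_isUnit_det S).mp hS.isUnit
  have hSR : S * S⁻¹ = 1 := mul_nonsing_inv S hSdet
  have hRS : S⁻¹ * S = 1 := nonsing_inv_mul S hSdet
  set N := S⁻¹ * H * S⁻¹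
  have hN : N.IsHermitian := by
    have hR : (S⁻¹).IsHermitian := IsHermitian.inv hS.isSelfAdjoint
    simp only [N, IsHermitian, conjTranspose_mul, hH.eq, hR.eq, mul_assoc]
  have hspec : spectrum ℝ N = spectrum ℝ (T⁻¹ * H) := by
    set u := hS.isUnit.unit
    have hconj : N = u * (T⁻¹ * H) * (↑u⁻¹ : Matrix m m ℝ) := by
      rw [coe_units_inv, IsUnit.unit_spec, ← hST, mul_inv_rev]
      simp only [N, ← mul_assoc, hSR, one_mul]
    rw [hconj, spectrum.units_conjugate]
  have hcongr : H - a • T = S * (N - a • 1) * S := by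
    simp only [N, mul_sub, sub_mul, ← mul_assoc, hSR, one_mul, mul_smul_comm, mul_one,
      smul_mul_assoc, hST]
    simp only [mul_assoc, hRS, mul_one]
  rw [hcongr, ← isStrictlyPositive_iff_posDef]
  exact IsStrictlyPositive.conjugate_of_isUnit_of_isSelfAdjoint _ _ hS.isUnit hS.isSelfAdjoint
    (hN.posDef_sub_smul_one (hspec ▸ h)).isStrictlyPositive

theorem posDef_smul_sub_of_spectrum_inv_mul_lt {H T : Matrix m m ℝ} (hH : H.IsHermitian)
    (hT : T.PosDef) {b : ℝ} (h : ∀ μ ∈ spectrum ℝ (T⁻¹ * H), μ < b) : (b • T - H).PosDef := by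
  have hneg := posDef_sub_smul_of_lt_spectrum_inv_mul hH.neg hT (a := -b) fun μ hμ => by
    rw [mul_neg, ← spectrum.neg_eq] at hμ
    exact neg_lt.mp (h _ hμ)
  rwa [neg_smul, sub_neg_eq_add, neg_add_eq_sub] at hneg

theorem PosDef.lt_of_mem_spectrum_inv_mul {A P : Matrix m m ℝ} (hP : P.PosDef) {a μ : ℝ}
    (h : (A - a • P).PosDef) (hμ : μ ∈ spectrum ℝ (P⁻¹ * A)) : a < μ := by
  by_contra! hμa
  have hpos : (A - μ • P).PosDef := by
    convert h.add_posSemidef (hP.posSemidef.smul (sub_nonneg.mpr hμa)) using 1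
    module
  have hfactor : algebraMap ℝ _ μ - P⁻¹ * A = -(P⁻¹ * (A - μ • P)) := by
    rw [mul_sub, mul_smul_comm, nonsing_inv_mul P ((isUnit_iff_isUnit_det P).mp hP.isUnit),
      Algebra.algebraMap_eq_smul_one]
    abel
  rw [spectrum.mem_iff, hfactor, IsUnit.neg_iff] at hμ
  exact hμ ((isUnit_nonsing_inv_iff.mpr hP.isUnit).mul hpos.isUnit)

theorem PosDef.mem_Ioo_of_mem_spectrum_inv_mul {A P : Matrix m m ℝ} (hP : P.PosDef) {a b μ : ℝ}
    (ha : (A - a • P).PosDef) (hb : (b • P - A).PosDef) (hμ : μ ∈ spectrum ℝ (P⁻¹ * A)) :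
    μ ∈ Set.Ioo a b := by
  refine ⟨hP.lt_of_mem_spectrum_inv_mul ha hμ, neg_lt_neg_iff.mp ?_⟩
  refine hP.lt_of_mem_spectrum_inv_mul (A := -A) ?_ ?_
  · rwa [neg_smul, sub_neg_eq_add, neg_add_eq_sub]
  · rwa [mul_neg, ← spectrum.neg_eq, Set.neg_mem_neg]

end Spectrum

section Kronecker

variable {n p q r : Type*} [DecidableEq p] [DecidableEq r]

def kroneckerMiddle {R : Type*} [CommSemiring R] (e : n ≃ (p × q) × r) :
    Matrix q q R →ₗ[R] Matrix n n R where
  toFun K := reindex e.symm e.symm ((1 ⊗ₖ K) ⊗ₖ (1 : Matrix r r R))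
  map_add' _ _ := by simp [kronecker_add, add_kronecker, submatrix_add]
  map_smul' _ _ := by simp [kronecker_smul, smul_kronecker, submatrix_smul]

theorem PosDef.kroneckerMiddle {𝕜 : Type*} [RCLike 𝕜] [Finite p] [Finite q] [Finite r]
    (e : n ≃ (p × q) × r) {K : Matrix q q 𝕜} (hK : K.PosDef) : (kroneckerMiddle e K).PosDef :=
  ((PosDef.one.kronecker hK).kronecker PosDef.one).submatrix e.injective

end Kronecker

section KroneckerSum

variable {ι n : Type*} [Fintype ι] [DecidableEq n] {p q r : ι → Type*}
  [∀ i, DecidableEq (p i)] [∀ i, DecidableEq (r i)]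
  (ν : ℝ) (c : ι → ℝ) (e : ∀ i, n ≃ (p i × q i) × r i)

def kroneckerSum (K : ∀ i, Matrix (q i) (q i) ℝ) : Matrix n n ℝ :=
  ν • 1 + ∑ i, c i • kroneckerMiddle (e i) (K i)

theorem kroneckerSum_sub_smul (H T : ∀ i, Matrix (q i) (q i) ℝ) (a : ℝ) :
    kroneckerSum ν c e H - a • kroneckerSum ν c e T =
      kroneckerSum ((1 - a) * ν) c e (fun i => H i - a • T i) := by
  simp only [kroneckerSum, map_sub, map_smul, smul_add, smul_sub, Finset.smul_sum,
    Finset.sum_sub_distrib, smul_comm a]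
  module

theorem smul_kroneckerSum_sub (H T : ∀ i, Matrix (q i) (q i) ℝ) (b : ℝ) :
    b • kroneckerSum ν c e T - kroneckerSum ν c e H =
      kroneckerSum ((b - 1) * ν) c e (fun i => b • T i - H i) := by
  simp only [kroneckerSum, map_sub, map_smul, smul_add, smul_sub, Finset.smul_sum,
    Finset.sum_sub_distrib, smul_comm b]
  module

variable {ν c} in
theorem posDef_kroneckerSum [Nonempty ι] [∀ i, Finite (p i)] [∀ i, Finite (q i)]
    [∀ i, Finite (r i)] (hν : 0 ≤ ν) (hc : ∀ i, 0 < c i) {K : ∀ i, Matrix (q i) (q i) ℝ}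
    (hK : ∀ i, (K i).PosDef) : (kroneckerSum ν c e K).PosDef :=
  PosDef.posSemidef_add (PosSemidef.one.smul hν) <|
    posDef_sum Finset.univ_nonempty fun i _ => ((hK i).kroneckerMiddle (e i)).smul (hc i)

end KroneckerSum

end Matrix

theorem spectrum_PinvA_kronecker_general (n d : ℕ) (hd : 0 < d)
    (p q r : Fin d → ℕ)
    (e : ∀ i : Fin d, Fin n ≃ (Fin (p i) × Fin (q i)) × Fin (r i))
    (H τm : ∀ i : Fin d, Matrix (Fin (q i)) (Fin (q i)) ℝ)
    (hH : ∀ i, (H i).PosDef) (hτ : ∀ i, (τm i).PosDef)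
    (hspec : ∀ i, ∀ μ ∈ spectrum ℝ ((τm i)⁻¹ * H i), μ ∈ Set.Ioo (1 / 2 : ℝ) (3 / 2))
    (ν : ℝ) (hν : 0 ≤ ν) (c : Fin d → ℝ) (hc : ∀ i, 0 < c i)
    (A P : Matrix (Fin n) (Fin n) ℝ)
    (hA : A = ν • (1 : Matrix (Fin n) (Fin n) ℝ) + ∑ i, c i •
      (Matrix.reindex (e i).symm (e i).symm
        (((1 : Matrix (Fin (p i)) (Fin (p i)) ℝ) ⊗ₖ H i) ⊗ₖ (1 : Matrix (Fin (r i)) (Fin (r i)) ℝ))))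
    (hP : P = ν • (1 : Matrix (Fin n) (Fin n) ℝ) + ∑ i, c i •
      (Matrix.reindex (e i).symm (e i).symm
        (((1 : Matrix (Fin (p i)) (Fin (p i)) ℝ) ⊗ₖ τm i) ⊗ₖ (1 : Matrix (Fin (r i)) (Fin (r i)) ℝ)))) :
    ∀ μ ∈ spectrum ℝ (P⁻¹ * A), μ ∈ Set.Ioo (1 / 2 : ℝ) (3 / 2) := by
  have : Nonempty (Fin d) := ⟨⟨0, hd⟩⟩
  replace hA : A = kroneckerSum ν c e H := hA
  replace hP : P = kroneckerSum ν c e τm := hP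
  have hlower : (A - (1 / 2 : ℝ) • P).PosDef := by
    rw [hA, hP, kroneckerSum_sub_smul]
    refine posDef_kroneckerSum e (by linarith) hc fun i => ?_
    exact posDef_sub_smul_of_lt_spectrum_inv_mul (hH i).isHermitian (hτ i)
      fun μ hμ => (hspec i μ hμ).1
  have hupper : ((3 / 2 : ℝ) • P - A).PosDef := by
    rw [hA, hP, smul_kroneckerSum_sub]
    refine posDef_kroneckerSum e (by linarith) hc fun i => ?_
    exact posDef_smul_sub_of_spectrum_inv_mul_lt (hH i).isHermitian (hτ i)
      fun μ hμ => (hspec i μ hμ).2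
  intro μ hμ
  exact (hP ▸ posDef_kroneckerSum e hν hc hτ).mem_Ioo_of_mem_spectrum_inv_mul hlower hupper hμ

theorem spectrum_PinvA_kronecker (n d : ℕ) (hd : 0 < d)
    (p q r : Fin d → ℕ)
    (e : ∀ i : Fin d, Fin n ≃ (Fin (p i) × Fin (q i)) × Fin (r i))
    (H τm : ∀ i : Fin d, Matrix (Fin (q i)) (Fin (q i)) ℝ)
    (hH : ∀ i, (H i).PosDef) (hτ : ∀ i, (τm i).PosDef)
    (hspec : ∀ i, ∀ μ ∈ spectrum ℝ ((τm i)⁻¹ * H i), μ ∈ Set.Ioo (1 / 2 : ℝ) (3 / 2))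
    (ν : ℝ) (hν : 0 ≤ ν) (c : Fin d → ℝ) (hc : ∀ i, 0 < c i)
    (A P : Matrix (Fin n) (Fin n) ℝ)
    (hA : A = ν • (1 : Matrix (Fin n) (Fin n) ℝ) + ∑ i, c i •
      (Matrix.reindex (e i).symm (e i).symm
        (((1 : Matrix (Fin (p i)) (Fin (p i)) ℝ) ⊗ₖ H i) ⊗ₖ (1 : Matrix (Fin (r i)) (Fin (r i)) ℝ))))
    (hP : P = ν • (1 : Matrix (Fin n) (Fin n) ℝ) + ∑ i, c i •
      (Matrix.reindex (e i).symm (e i).symm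
        (((1 : Matrix (Fin (p i)) (Fin (p i)) ℝ) ⊗ₖ τm i) ⊗ₖ (1 : Matrix (Fin (r i)) (Fin (r i)) ℝ))))
    (hAsymm : A.IsSymm) (hPsymm : P.IsSymm) :
    ∀ μ ∈ spectrum ℝ (P⁻¹ * A), μ ∈ Set.Ioo (1 / 2 : ℝ) (3 / 2) :=
  spectrum_PinvA_kronecker_general n d hd p q r e H τm hH hτ hspec ν hν c hc A P hA hP
end
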